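/- Corollary (counting real solutions): Let f₁,…,f_s ∈ ℝ[x₁,…,x_n] generate a zero-dimensional ideal, set A = ℝ[x₁,…,x_n]/⟨f₁,…,f_s⟩ (so A is finite-dimensional over ℝ), and let S = {a ∈ ℝⁿ : f₁(a) = ⋯ = f_s(a) = 0} be the set of real solutions. Then the quadratic form Q_A on A defined by Q_A(α) = Tr(m_{α²}) has signature σ(Q_A) = #S, the number of real solutions. -/

import Mathlib

set_option linter.unusedSectionVars false
set_option maxHeartbeats 1000000

open LinearMap Module Submodule

section TraceLemmas

variable {A : Type*} [CommRing A] [Algebra ℝ A] [FiniteDimensional ℝ A]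

private noncomputable def TF : A →ₗ[ℝ] A →ₗ[ℝ] ℝ :=
  (LinearMap.mul ℝ A).compr₂ ((LinearMap.trace ℝ A) ∘ₗ (LinearMap.mul ℝ A))

private lemma TF_apply (x y : A) :
    TF x y = LinearMap.trace ℝ A (LinearMap.mulLeft ℝ (x * y)) := by
  have : LinearMap.mul ℝ A (x * y) = LinearMap.mulLeft ℝ (x * y) := rfl
  simp only [TF, LinearMap.compr₂_apply, LinearMap.comp_apply, LinearMap.mul_apply', this]

private lemma mulLeft_sub' (x y : A) :
    LinearMap.mulLeft ℝ (x - y) = LinearMap.mulLeft ℝ x - LinearMap.mulLeft ℝ y :=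
  LinearMap.ext fun w => by simp [sub_mul]

private lemma mulLeft_add' (x y : A) :
    LinearMap.mulLeft ℝ (x + y) = LinearMap.mulLeft ℝ x + LinearMap.mulLeft ℝ y :=
  LinearMap.ext fun w => by simp [add_mul]

private lemma mulLeft_smul' (r : ℝ) (y : A) :
    LinearMap.mulLeft ℝ (r • y) = r • LinearMap.mulLeft ℝ y :=
  LinearMap.ext fun w => smul_mul_assoc r y w

private lemma tr_smul' (r : ℝ) (y : A) :
    LinearMap.trace ℝ A (LinearMap.mulLeft ℝ (r • y)) =
      r * LinearMap.trace ℝ A (LinearMap.mulLeft ℝ y) := by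
  rw [mulLeft_smul', map_smul, smul_eq_mul]

private lemma tr_sub' (x y : A) :
    LinearMap.trace ℝ A (LinearMap.mulLeft ℝ (x - y)) =
      LinearMap.trace ℝ A (LinearMap.mulLeft ℝ x) -
        LinearMap.trace ℝ A (LinearMap.mulLeft ℝ y) := by
  rw [mulLeft_sub', map_sub]

private lemma tr_add' (x y : A) :
    LinearMap.trace ℝ A (LinearMap.mulLeft ℝ (x + y)) =
      LinearMap.trace ℝ A (LinearMap.mulLeft ℝ x) +
        LinearMap.trace ℝ A (LinearMap.mulLeft ℝ y) := by
  rw [mulLeft_add', map_add]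

private lemma tr_nil {x : A} (h : x ∈ nilradical A) :
    LinearMap.trace ℝ A (LinearMap.mulLeft ℝ x) = 0 := by
  obtain ⟨k, hk⟩ := h
  have hnil : IsNilpotent (LinearMap.mulLeft ℝ x) :=
    ⟨k, by rw [LinearMap.pow_mulLeft, hk, LinearMap.mulLeft_zero_eq_zero]⟩
  exact (LinearMap.isNilpotent_trace_of_isNilpotent hnil).eq_zero

private lemma tr_congr {x y : A} (h : x - y ∈ nilradical A) :
    LinearMap.trace ℝ A (LinearMap.mulLeft ℝ x) = LinearMap.trace ℝ A (LinearMap.mulLeft ℝ y) := by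
  have h2 := tr_nil h
  rw [tr_sub'] at h2
  linarith

private lemma tr_idem_pos {ε : A} (hε : IsIdempotentElem ε) (h0 : ε ≠ 0) :
    0 < LinearMap.trace ℝ A (LinearMap.mulLeft ℝ ε) := by
  set p := LinearMap.range (LinearMap.mulLeft ℝ ε) with hp
  have hproj : LinearMap.IsProj p (LinearMap.mulLeft ℝ ε) := by
    refine ⟨fun x => LinearMap.mem_range_self _ x, ?_⟩
    rintro x ⟨y, rfl⟩
    show ε * (ε * y) = ε * y
    rw [← mul_assoc, hε.eq]
  rw [hproj.trace]
  have hmem : ε ∈ p := ⟨ε, hε.eq⟩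
  have hfr : finrank ℝ p ≠ 0 := by
    intro hzero
    rw [Submodule.finrank_eq_zero] at hzero
    rw [hzero] at hmem
    exact h0 (Submodule.mem_bot ℝ |>.mp hmem)
  exact_mod_cast Nat.pos_of_ne_zero hfr

private lemma mk_smul (I : Ideal A) (r : ℝ) (x : A) :
    Ideal.Quotient.mk I (r • x) = r • Ideal.Quotient.mk I x :=
  map_smul (Ideal.Quotient.mkₐ ℝ I) r x

end TraceLemmas

section SpanHelpers

variable {V : Type*} [AddCommGroup V] [Module ℝ V] [FiniteDimensional ℝ V]

private lemma span_singleton_top {v : V} (hv : v ≠ 0) (h1 : finrank ℝ V = 1) :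
    Submodule.span ℝ {v} = ⊤ :=
  Submodule.eq_top_of_finrank_eq (by rw [finrank_span_singleton hv, h1])

private lemma span_pair_top (h2 : finrank ℝ V = 2) {x y : V} (hx : x ≠ 0)
    (hy : y ∉ Submodule.span ℝ {x}) : Submodule.span ℝ ({x, y} : Set V) = ⊤ := by
  by_contra hne
  have hlt : Submodule.span ℝ ({x, y} : Set V) < ⊤ := lt_top_iff_ne_top.mpr hne
  have h3 : finrank ℝ (Submodule.span ℝ ({x, y} : Set V)) < 2 := h2 ▸ Submodule.finrank_lt hlt.ne
  have hle : Submodule.span ℝ ({x} : Set V) ≤ Submodule.span ℝ ({x, y} : Set V) :=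
    Submodule.span_mono (Set.singleton_subset_iff.mpr (Set.mem_insert x {y}))
  have h4 : finrank ℝ (Submodule.span ℝ ({x} : Set V)) = 1 := finrank_span_singleton hx
  have heq : Submodule.span ℝ ({x} : Set V) = Submodule.span ℝ ({x, y} : Set V) :=
    Submodule.eq_of_le_of_finrank_le hle (by omega)
  exact hy (heq ▸ Submodule.subset_span (Set.mem_insert_of_mem x rfl))

end SpanHelpers

section Factor

variable {A : Type*} [CommRing A] [Algebra ℝ A] [FiniteDimensional ℝ A]

private lemma mem_nil_iff' [IsArtinianRing A] (x : A) :
    x ∈ nilradical A ↔ ∀ m : {I : Ideal A // I.IsMaximal}, Ideal.Quotient.mk m.1 x = 0 := by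
  rw [mem_nilradical, nilpotent_iff_mem_prime]
  constructor
  · intro h m
    exact Ideal.Quotient.eq_zero_iff_mem.mpr (h m.1 m.2.isPrime)
  · intro h J hJ
    have hm : J.IsMaximal := (IsArtinianRing.isPrime_iff_isMaximal J).mp hJ
    exact Ideal.Quotient.eq_zero_iff_mem.mp (h ⟨J, hm⟩)

private lemma factor_key [IsArtinianRing A] (m : {I : Ideal A // I.IsMaximal}) :
    ∃ ε w : A, IsIdempotentElem ε ∧
      Ideal.Quotient.mk m.1 ε = 1 ∧
      (∀ m' : {I : Ideal A // I.IsMaximal}, m' ≠ m → Ideal.Quotient.mk m'.1 ε = 0) ∧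
      (∀ m' : {I : Ideal A // I.IsMaximal}, m' ≠ m → Ideal.Quotient.mk m'.1 w = 0) ∧
      TF ε w = 0 ∧ TF w ε = 0 ∧ 0 < TF ε ε ∧
      ((finrank ℝ (A ⧸ m.1) = 1 ∧ w = 0) ∨ (finrank ℝ (A ⧸ m.1) = 2 ∧ TF w w < 0)) ∧
      (∀ u : A ⧸ m.1, ∃ α β : ℝ,
        u = α • Ideal.Quotient.mk m.1 ε + β • Ideal.Quotient.mk m.1 w) := by
  haveI : Finite {I : Ideal A // I.IsMaximal} := (IsArtinianRing.setOfPred_isMaximal_finite A).to_subtype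
  haveI hmax : m.1.IsMaximal := m.2
  letI : Field (A ⧸ m.1) := Ideal.Quotient.field m.1
  haveI : FiniteDimensional ℝ (A ⧸ m.1) :=
    Module.Finite.of_surjective (Ideal.Quotient.mkₐ ℝ m.1).toLinearMap
      Ideal.Quotient.mk_surjective
  classical
  -- CRT element
  have hcop : Pairwise fun i j : {I : Ideal A // I.IsMaximal} => IsCoprime i.1 j.1 := by
    intro i j hij
    exact Ideal.isCoprime_iff_sup_eq.mpr (i.2.coprime_of_ne j.2 fun h => hij (Subtype.ext h))
  obtain ⟨a, ha⟩ := Ideal.exists_forall_sub_mem_ideal (I := fun m' : {I : Ideal A // I.IsMaximal}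
    => m'.1) hcop (fun m' => if m' = m then 1 else 0)
  have ha1 : Ideal.Quotient.mk m.1 a = 1 := by
    have h := ha m
    rw [if_pos rfl] at h
    calc Ideal.Quotient.mk m.1 a = Ideal.Quotient.mk m.1 1 := Ideal.Quotient.eq.mpr h
    _ = 1 := map_one _
  have ha0 : ∀ m' : {I : Ideal A // I.IsMaximal}, m' ≠ m → Ideal.Quotient.mk m'.1 a = 0 := by
    intro m' hne
    have h := ha m'
    rw [if_neg hne, sub_zero] at h
    exact Ideal.Quotient.eq_zero_iff_mem.mpr h
  -- idempotent lift
  have hker : ∀ x ∈ RingHom.ker (Ideal.Quotient.mk (nilradical A)), IsNilpotent x := by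
    intro x hx
    rw [RingHom.mem_ker, Ideal.Quotient.eq_zero_iff_mem, mem_nilradical] at hx
    exact hx
  have haidem : IsIdempotentElem (Ideal.Quotient.mk (nilradical A) a) := by
    show _ * _ = _
    rw [← map_mul]
    refine Ideal.Quotient.eq.mpr ((mem_nil_iff' _).mpr fun m' => ?_)
    rw [map_sub, map_mul]
    rcases eq_or_ne m' m with rfl | hne
    · rw [ha1]; ring
    · rw [ha0 m' hne]; ring
  obtain ⟨ε, hεidem, hεa⟩ := exists_isIdempotentElem_eq_of_ker_isNilpotent
    (f := Ideal.Quotient.mk (nilradical A)) hker _ ⟨a, rfl⟩ haidem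
  have hεnil : ε - a ∈ nilradical A := Ideal.Quotient.eq.mp hεa
  have hmkε : ∀ m' : {I : Ideal A // I.IsMaximal},
      Ideal.Quotient.mk m'.1 ε = Ideal.Quotient.mk m'.1 a := by
    intro m'
    haveI : m'.1.IsPrime := m'.2.isPrime
    exact Ideal.Quotient.eq.mpr (nilradical_le_prime m'.1 hεnil)
  have hε1 : Ideal.Quotient.mk m.1 ε = 1 := (hmkε m).trans ha1
  have hε0 : ∀ m' : {I : Ideal A // I.IsMaximal}, m' ≠ m → Ideal.Quotient.mk m'.1 ε = 0 :=
    fun m' h => (hmkε m').trans (ha0 m' h)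
  have hεne : ε ≠ 0 := fun h => one_ne_zero (α := A ⧸ m.1) (by rw [← hε1, h, map_zero])
  have ha₀pos : 0 < LinearMap.trace ℝ A (LinearMap.mulLeft ℝ ε) := tr_idem_pos hεidem hεne
  set a₀ := LinearMap.trace ℝ A (LinearMap.mulLeft ℝ ε) with ha₀
  have hTεε : TF ε ε = a₀ := by rw [TF_apply, hεidem.eq]
  -- dimension facts
  have hdpos : 0 < finrank ℝ (A ⧸ m.1) := finrank_pos
  have hdle : finrank ℝ (A ⧸ m.1) ≤ 2 := by
    haveI : Algebra.IsAlgebraic ℝ (A ⧸ m.1) := inferInstance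
    let ψ : (A ⧸ m.1) →ₐ[ℝ] ℂ := IsAlgClosed.lift
    have hinj : Function.Injective ψ.toLinearMap := RingHom.injective (ψ : (A ⧸ m.1) →+* ℂ)
    have h := LinearMap.finrank_le_finrank_of_injective hinj
    rwa [Complex.finrank_real_complex] at h
  rcases (by omega : finrank ℝ (A ⧸ m.1) = 1 ∨ finrank ℝ (A ⧸ m.1) = 2) with hd | hd
  · -- dimension 1
    have hTzero : TF ε (0 : A) = 0 := by
      rw [TF_apply, mul_zero, LinearMap.mulLeft_zero_eq_zero, map_zero]
    have hTzero' : TF (0 : A) ε = 0 := by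
      rw [TF_apply, zero_mul, LinearMap.mulLeft_zero_eq_zero, map_zero]
    refine ⟨ε, 0, hεidem, hε1, hε0, fun _ _ => map_zero _, hTzero, hTzero',
      hTεε ▸ ha₀pos, Or.inl ⟨hd, rfl⟩, ?_⟩
    intro u
    have hsp := span_singleton_top (one_ne_zero : (1 : A ⧸ m.1) ≠ 0) hd
    obtain ⟨α, hα⟩ := Submodule.mem_span_singleton.mp (hsp ▸ Submodule.mem_top : u ∈ _)
    exact ⟨α, 0, by rw [hε1, map_zero, smul_zero, add_zero, ← hα]⟩
  · -- dimension 2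
    have h1ne : (1 : A ⧸ m.1) ≠ 0 := one_ne_zero
    have hyex : ∃ y : A ⧸ m.1, y ∉ Submodule.span ℝ {(1 : A ⧸ m.1)} := by
      by_contra h
      push_neg at h
      have htop : Submodule.span ℝ {(1 : A ⧸ m.1)} = ⊤ := Submodule.eq_top_iff'.mpr h
      have h1 := finrank_span_singleton (K := ℝ) h1ne
      rw [htop, finrank_top] at h1
      omega
    obtain ⟨y, hy⟩ := hyex
    have hyy : y * y ∈ Submodule.span ℝ ({1, y} : Set (A ⧸ m.1)) := by
      rw [span_pair_top hd h1ne hy]; trivial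
    obtain ⟨α, β, hαβ⟩ := Submodule.mem_span_pair.mp hyy
    set c := β / 2 with hc
    set z := y - c • (1 : A ⧸ m.1) with hz
    set γ := α + c * c with hγdef
    have hz2 : z * z = γ • (1 : A ⧸ m.1) := by
      have expand : z * z = y * y - c • y - c • y + (c * c) • (1 : A ⧸ m.1) := by
        rw [hz, sub_mul, mul_sub, mul_sub, mul_smul_comm c y 1, mul_one,
          smul_mul_assoc c 1 y, one_mul, smul_mul_assoc c 1 (c • (1 : A ⧸ m.1)), one_mul,
          smul_smul]
        abel
      rw [expand, ← hαβ, hγdef, add_smul]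
      have hβ : β = c + c := by rw [hc]; ring
      rw [hβ, add_smul]
      abel
    have hznot : z ∉ Submodule.span ℝ {(1 : A ⧸ m.1)} := by
      intro hmem
      obtain ⟨δ, hδ⟩ := Submodule.mem_span_singleton.mp hmem
      refine hy (Submodule.mem_span_singleton.mpr ⟨δ + c, ?_⟩)
      rw [add_smul, hδ, hz]
      abel
    have hγneg : γ < 0 := by
      by_contra hcon
      push_neg at hcon
      set s := Real.sqrt γ with hs
      have hss : s * s = γ := Real.mul_self_sqrt hcon
      have hfac : (z - s • (1 : A ⧸ m.1)) * (z + s • 1) = 0 := by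
        rw [sub_mul, mul_add, mul_add, mul_smul_comm s z 1, mul_one,
          smul_mul_assoc s 1 z, one_mul, smul_mul_assoc s 1 (s • (1 : A ⧸ m.1)), one_mul,
          smul_smul, hss, hz2]
        abel
      rcases mul_eq_zero.mp hfac with h1 | h1
      · rw [sub_eq_zero] at h1
        exact hznot (Submodule.mem_span_singleton.mpr ⟨s, h1.symm⟩)
      · have h2 : z = (-s) • (1 : A ⧸ m.1) := by
          rw [neg_smul]
          exact eq_neg_of_add_eq_zero_left h1
        exact hznot (Submodule.mem_span_singleton.mpr ⟨-s, h2.symm⟩)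
    obtain ⟨j0, hj0⟩ := Ideal.Quotient.mk_surjective (I := m.1) z
    set j := ε * j0 with hj
    have hjm : Ideal.Quotient.mk m.1 j = z := by rw [hj, map_mul, hε1, one_mul, hj0]
    have hjm0 : ∀ m' : {I : Ideal A // I.IsMaximal}, m' ≠ m → Ideal.Quotient.mk m'.1 j = 0 :=
      fun m' h => by rw [hj, map_mul, hε0 m' h, zero_mul]
    set b₀ := LinearMap.trace ℝ A (LinearMap.mulLeft ℝ (ε * j)) with hb₀
    set r := b₀ / a₀ with hr
    set w := j - r • ε with hw
    have hw0 : ∀ m' : {I : Ideal A // I.IsMaximal}, m' ≠ m → Ideal.Quotient.mk m'.1 w = 0 := by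
      intro m' h
      rw [hw, map_sub, hjm0 m' h, mk_smul, hε0 m' h, smul_zero, sub_zero]
    have hmkw : Ideal.Quotient.mk m.1 w = z - r • 1 := by
      rw [hw, map_sub, hjm, mk_smul, hε1]
    have hεw : ε * w = ε * j - r • ε := by
      rw [hw, mul_sub, mul_smul_comm, hεidem.eq]
    have hTεw : TF ε w = 0 := by
      rw [TF_apply, hεw, tr_sub', tr_smul', ← hb₀, ← ha₀, hr]
      field_simp
      ring
    have hTwε : TF w ε = 0 := by
      rw [TF_apply, mul_comm w ε, ← TF_apply]
      exact hTεw
    have hjjnil : j * j - γ • ε ∈ nilradical A := by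
      rw [mem_nil_iff']
      intro m'
      rw [map_sub, map_mul, mk_smul]
      rcases eq_or_ne m' m with rfl | hne
      · rw [hjm, hε1, hz2, sub_self]
      · rw [hjm0 m' hne, hε0 m' hne, smul_zero, zero_mul, sub_zero]
    have hjj : LinearMap.trace ℝ A (LinearMap.mulLeft ℝ (j * j)) = γ * a₀ := by
      rw [tr_congr hjjnil, tr_smul', ← ha₀]
    have hexp : w * w = j * j - r • (ε * j) - r • (ε * j) + (r * r) • ε := by
      rw [hw, sub_mul, mul_sub, mul_sub, mul_smul_comm r j ε, smul_mul_assoc r ε j,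
        smul_mul_assoc r ε (r • ε), mul_smul_comm r ε ε, smul_smul, hεidem.eq,
        mul_comm j ε]
      abel
    have hTww : TF w w < 0 := by
      rw [TF_apply, hexp, tr_add', tr_sub', tr_sub', tr_smul', tr_smul',
        hjj, ← hb₀, ← ha₀]
      have hkey : r * r * a₀ = r * b₀ := by
        rw [hr]; field_simp
      rw [hkey]
      have h1 : γ * a₀ < 0 := mul_neg_of_neg_of_pos hγneg ha₀pos
      have h2 : 0 ≤ r * b₀ := by
        rw [hr, div_mul_eq_mul_div]
        exact div_nonneg (mul_self_nonneg b₀) ha₀pos.le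
      linarith
    have hz'notin : (z - r • 1) ∉ Submodule.span ℝ {(1 : A ⧸ m.1)} := by
      intro hmem
      obtain ⟨δ, hδ⟩ := Submodule.mem_span_singleton.mp hmem
      refine hznot (Submodule.mem_span_singleton.mpr ⟨δ + r, ?_⟩)
      rw [add_smul, hδ]
      abel
    have hspan2 := span_pair_top hd h1ne hz'notin
    refine ⟨ε, w, hεidem, hε1, hε0, hw0, hTεw, hTwε, hTεε ▸ ha₀pos,
      Or.inr ⟨hd, hTww⟩, ?_⟩
    intro u
    obtain ⟨α', β', hu⟩ := Submodule.mem_span_pair.mp (hspan2 ▸ Submodule.mem_top : u ∈ _)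
    exact ⟨α', β', by rw [hε1, hmkw, ← hu]⟩

end Factor

section HomCount

variable {A : Type*} [CommRing A] [Algebra ℝ A] [FiniteDimensional ℝ A]

private def sumSubtypeLeft {α β : Type*} {P : α ⊕ β → Prop} (h : ∀ y : β, ¬ P (.inr y)) :
    {x : α ⊕ β // P x} ≃ {a : α // P (.inl a)} where
  toFun x := match x with
    | ⟨.inl a, h'⟩ => ⟨a, h'⟩
    | ⟨.inr y, h'⟩ => absurd h' (h y)
  invFun a := ⟨.inl a.1, a.2⟩
  left_inv := by
    rintro ⟨a | y, h'⟩
    · rfl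
    · exact absurd h' (h y)
  right_inv a := rfl

private def sumSubtypeRight {α β : Type*} {P : α ⊕ β → Prop} (h : ∀ a : α, ¬ P (.inl a)) :
    {x : α ⊕ β // P x} ≃ {y : β // P (.inr y)} where
  toFun x := match x with
    | ⟨.inl a, h'⟩ => absurd h' (h a)
    | ⟨.inr y, h'⟩ => ⟨y, h'⟩
  invFun y := ⟨.inr y.1, y.2⟩
  left_inv := by
    rintro ⟨a | y, h'⟩
    · exact absurd h' (h a)
    · rfl
  right_inv y := rfl

private noncomputable def dim1Equiv (m : {I : Ideal A // I.IsMaximal})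
    (h1 : finrank ℝ (A ⧸ m.1) = 1) : ℝ ≃ₐ[ℝ] (A ⧸ m.1) := by
  haveI : m.1.IsMaximal := m.2
  letI : Field (A ⧸ m.1) := Ideal.Quotient.field m.1
  refine AlgEquiv.ofBijective (Algebra.ofId ℝ (A ⧸ m.1)) ⟨?_, ?_⟩
  · intro x y hxy
    exact RingHom.injective (algebraMap ℝ (A ⧸ m.1)) hxy
  · intro u
    haveI : FiniteDimensional ℝ (A ⧸ m.1) :=
      Module.Finite.of_surjective (Ideal.Quotient.mkₐ ℝ m.1).toLinearMap
        Ideal.Quotient.mk_surjective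
    have hsp := span_singleton_top (one_ne_zero : (1 : A ⧸ m.1) ≠ 0) h1
    obtain ⟨α, hα⟩ := Submodule.mem_span_singleton.mp (hsp ▸ Submodule.mem_top : u ∈ _)
    exact ⟨α, by rw [← hα, Algebra.ofId_apply, Algebra.algebraMap_eq_smul_one]⟩

private noncomputable def dim1Hom (m : {I : Ideal A // I.IsMaximal})
    (h1 : finrank ℝ (A ⧸ m.1) = 1) : A →ₐ[ℝ] ℝ :=
  ((dim1Equiv m h1).symm.toAlgHom).comp (Ideal.Quotient.mkₐ ℝ m.1)

private lemma dim1Hom_ker (m : {I : Ideal A // I.IsMaximal})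
    (h1 : finrank ℝ (A ⧸ m.1) = 1) : RingHom.ker (dim1Hom m h1) = m.1 := by
  ext x
  rw [RingHom.mem_ker]
  show (dim1Equiv m h1).symm (Ideal.Quotient.mkₐ ℝ m.1 x) = 0 ↔ x ∈ m.1
  rw [EmbeddingLike.map_eq_zero_iff, Ideal.Quotient.mkₐ_eq_mk,
    Ideal.Quotient.eq_zero_iff_mem]

private lemma algHom_surjective (φ : A →ₐ[ℝ] ℝ) : Function.Surjective φ := fun r =>
  ⟨algebraMap ℝ A r, by rw [AlgHom.commutes]; simp⟩

private lemma algHom_ker_isMaximal (φ : A →ₐ[ℝ] ℝ) : (RingHom.ker φ).IsMaximal :=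
  RingHom.ker_isMaximal_of_surjective φ (algHom_surjective φ)

private lemma algHom_finrank (φ : A →ₐ[ℝ] ℝ) :
    finrank ℝ (A ⧸ (RingHom.ker φ : Ideal A)) = 1 := by
  have e := Ideal.quotientKerAlgEquivOfSurjective (algHom_surjective φ)
  rw [e.toLinearEquiv.finrank_eq, Module.finrank_self]

private lemma dim1Hom_eq (φ : A →ₐ[ℝ] ℝ) (m : {I : Ideal A // I.IsMaximal})
    (h1 : finrank ℝ (A ⧸ m.1) = 1) (hker : m.1 = RingHom.ker φ) : dim1Hom m h1 = φ := by
  apply AlgHom.ext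
  intro x
  show (dim1Equiv m h1).symm (Ideal.Quotient.mkₐ ℝ m.1 x) = φ x
  rw [AlgEquiv.symm_apply_eq]
  show Ideal.Quotient.mkₐ ℝ m.1 x = Algebra.ofId ℝ (A ⧸ m.1) (φ x)
  rw [Algebra.ofId_apply, ← (Ideal.Quotient.mkₐ ℝ m.1).commutes (φ x)]
  refine Ideal.Quotient.eq.mpr ?_
  rw [hker, RingHom.mem_ker, map_sub, AlgHom.commutes]
  simp

private noncomputable def homEquiv :
    (A →ₐ[ℝ] ℝ) ≃ {p : {I : Ideal A // I.IsMaximal} // finrank ℝ (A ⧸ p.1) = 1} where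

  toFun φ := ⟨⟨RingHom.ker φ, algHom_ker_isMaximal φ⟩, algHom_finrank φ⟩
  invFun m := dim1Hom m.1 m.2
  left_inv φ := dim1Hom_eq φ _ _ rfl
  right_inv m := by
    ext : 2
    exact dim1Hom_ker m.1 m.2

end HomCount

section Invariance

variable {V : Type*} [AddCommGroup V] [Module ℝ V] [FiniteDimensional ℝ V]

private lemma diag_expand (B : V →ₗ[ℝ] V →ₗ[ℝ] ℝ) {ι : Type*} [Fintype ι] (b : Basis ι ℝ V)
    (hb : ∀ i j, i ≠ j → B (b i) (b j) = 0) (t : Finset ι) (c : ι → ℝ) :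
    B (∑ i ∈ t, c i • b i) (∑ i ∈ t, c i • b i) = ∑ i ∈ t, (c i)^2 * B (b i) (b i) := by
  simp only [map_sum, map_smul, LinearMap.sum_apply, LinearMap.smul_apply, smul_eq_mul]
  refine Finset.sum_congr rfl fun i hi => ?_
  rw [Finset.mul_sum, Finset.sum_eq_single i
    (fun j hj hne => by rw [hb j i hne]; ring) (fun h => (h hi).elim)]
  ring

private lemma span_pos (B : V →ₗ[ℝ] V →ₗ[ℝ] ℝ) {ι : Type*} [Fintype ι] (b : Basis ι ℝ V)
    (hb : ∀ i j, i ≠ j → B (b i) (b j) = 0) (s : Set ι) (hs : ∀ i ∈ s, 0 < B (b i) (b i))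
    {x : V} (hx : x ∈ span ℝ (b '' s)) (hx0 : x ≠ 0) : 0 < B x x := by
  classical
  have hsupp : ↑(b.repr x).support ⊆ s := b.mem_span_image.mp hx
  have hrepr : x = ∑ i ∈ (b.repr x).support, (b.repr x) i • b i := by
    conv_lhs => rw [← b.linearCombination_repr x]
    rw [Finsupp.linearCombination_apply, Finsupp.sum]
  rw [hrepr, diag_expand B b hb]
  have hne : (b.repr x).support.Nonempty := by
    rw [Finsupp.support_nonempty_iff]
    intro h
    exact hx0 (by simpa [h] using hrepr)
  obtain ⟨i0, hi0⟩ := hne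
  refine Finset.sum_pos' (fun i hi => ?_) ⟨i0, hi0, ?_⟩
  · have := hs i (hsupp hi)
    positivity
  · have h1 : (b.repr x) i0 ≠ 0 := Finsupp.mem_support_iff.mp hi0
    have := hs i0 (hsupp hi0)
    positivity

private lemma span_nonpos (B : V →ₗ[ℝ] V →ₗ[ℝ] ℝ) {ι : Type*} [Fintype ι] (b : Basis ι ℝ V)
    (hb : ∀ i j, i ≠ j → B (b i) (b j) = 0) (s : Set ι) (hs : ∀ i ∈ s, B (b i) (b i) ≤ 0)
    {x : V} (hx : x ∈ span ℝ (b '' s)) : B x x ≤ 0 := by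
  classical
  have hsupp : ↑(b.repr x).support ⊆ s := b.mem_span_image.mp hx
  have hrepr : x = ∑ i ∈ (b.repr x).support, (b.repr x) i • b i := by
    conv_lhs => rw [← b.linearCombination_repr x]
    rw [Finsupp.linearCombination_apply, Finsupp.sum]
  rw [hrepr, diag_expand B b hb]
  refine Finset.sum_nonpos fun i hi => ?_
  have h := hs i (hsupp hi)
  nlinarith [sq_nonneg ((b.repr x) i)]

private lemma pos_count_le (B : V →ₗ[ℝ] V →ₗ[ℝ] ℝ) {ι κ : Type*} [Fintype ι] [Fintype κ]
    (b : Basis ι ℝ V) (c : Basis κ ℝ V)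
    (hb : ∀ i j, i ≠ j → B (b i) (b j) = 0) (hc : ∀ i j, i ≠ j → B (c i) (c j) = 0) :
    Nat.card {i : ι // 0 < B (b i) (b i)} ≤ Nat.card {j : κ // 0 < B (c j) (c j)} := by
  classical
  set sb : Set ι := {i | 0 < B (b i) (b i)} with hsb
  set sc : Set κ := {j | ¬ 0 < B (c j) (c j)} with hsc
  set P : Submodule ℝ V := span ℝ (b '' sb) with hP
  set N : Submodule ℝ V := span ℝ (c '' sc) with hN
  have hdisj : Disjoint P N := by
    rw [Submodule.disjoint_def]
    intro x hxP hxN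
    by_contra h0
    have h1 := span_pos B b hb sb (fun i hi => hi) hxP h0
    have h2 := span_nonpos B c hc sc (fun j hj => not_lt.mp hj) hxN
    linarith
  have hdim := Submodule.finrank_add_finrank_le_of_disjoint hdisj
  have hPrank : finrank ℝ P = Fintype.card {i : ι // 0 < B (b i) (b i)} := by
    have h1 : LinearIndependent ℝ (fun i : sb => b i) :=
      b.linearIndependent.comp _ Subtype.val_injective
    have h2 : Set.range (fun i : sb => b i) = b '' sb := Set.image_eq_range b sb ▸ rfl
    rw [hP, ← h2, finrank_span_eq_card h1]
    rfl
  have hNrank : finrank ℝ N = Fintype.card {j : κ // ¬ 0 < B (c j) (c j)} := by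
    have h1 : LinearIndependent ℝ (fun j : sc => c j) :=
      c.linearIndependent.comp _ Subtype.val_injective
    have h2 : Set.range (fun j : sc => c j) = c '' sc := Set.image_eq_range c sc ▸ rfl
    rw [hN, ← h2, finrank_span_eq_card h1]
    rfl
  have hV : finrank ℝ V = Fintype.card κ := (Module.finrank_eq_card_basis c).symm ▸ rfl
  have hsplit : Fintype.card {j : κ // ¬ 0 < B (c j) (c j)} =
      Fintype.card κ - Fintype.card {j : κ // 0 < B (c j) (c j)} :=
    Fintype.card_subtype_compl _
  have hle : Fintype.card {j : κ // 0 < B (c j) (c j)} ≤ Fintype.card κ :=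
    Fintype.card_subtype_le _
  rw [Nat.card_eq_fintype_card, Nat.card_eq_fintype_card]
  omega

private lemma pos_count_eq (B : V →ₗ[ℝ] V →ₗ[ℝ] ℝ) {ι κ : Type*} [Fintype ι] [Fintype κ]
    (b : Basis ι ℝ V) (c : Basis κ ℝ V)
    (hb : ∀ i j, i ≠ j → B (b i) (b j) = 0) (hc : ∀ i j, i ≠ j → B (c i) (c j) = 0) :
    Nat.card {i : ι // 0 < B (b i) (b i)} = Nat.card {j : κ // 0 < B (c j) (c j)} :=
  le_antisymm (pos_count_le B b c hb hc) (pos_count_le B c b hc hb)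

private lemma neg_count_eq (B : V →ₗ[ℝ] V →ₗ[ℝ] ℝ) {ι κ : Type*} [Fintype ι] [Fintype κ]
    (b : Basis ι ℝ V) (c : Basis κ ℝ V)
    (hb : ∀ i j, i ≠ j → B (b i) (b j) = 0) (hc : ∀ i j, i ≠ j → B (c i) (c j) = 0) :
    Nat.card {i : ι // B (b i) (b i) < 0} = Nat.card {j : κ // B (c j) (c j) < 0} := by
  have h := pos_count_eq (-B) b c (fun i j hij => by simp [hb i j hij])
    (fun i j hij => by simp [hc i j hij])
  simpa [neg_pos] using h

end Invariance

section Main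

private theorem sig_eq_card_algHom (A : Type*) [CommRing A] [Algebra ℝ A]
    [FiniteDimensional ℝ A] {ι : Type*} [Fintype ι] (b : Basis ι ℝ A)
    (hdiag : ∀ i j, i ≠ j → LinearMap.trace ℝ A (LinearMap.mulLeft ℝ (b i * b j)) = 0) :
    (Nat.card {i : ι // 0 < LinearMap.trace ℝ A (LinearMap.mulLeft ℝ (b i * b i))} : ℤ) -
      (Nat.card {i : ι // LinearMap.trace ℝ A (LinearMap.mulLeft ℝ (b i * b i)) < 0} : ℤ) =
      Nat.card (A →ₐ[ℝ] ℝ) := by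
  classical
  haveI : IsArtinianRing A := isArtinian_of_tower ℝ inferInstance
  haveI : Finite {I : Ideal A // I.IsMaximal} :=
    (IsArtinianRing.setOfPred_isMaximal_finite A).to_subtype
  letI : Fintype {I : Ideal A // I.IsMaximal} := Fintype.ofFinite _
  haveI hFD : ∀ m : {I : Ideal A // I.IsMaximal}, FiniteDimensional ℝ (A ⧸ m.1) := fun m =>
    Module.Finite.of_surjective (Ideal.Quotient.mkₐ ℝ m.1).toLinearMap
      Ideal.Quotient.mk_surjective
  choose ε w hidem hε1 hε0 hw0 hTεw hTwε hTpos hdim hspan using factor_key (A := A)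
  let NR : Submodule ℝ A := Submodule.restrictScalars ℝ (nilradical A)
  let nb := Module.Free.chooseBasis ℝ NR
  let KN := Module.Free.ChooseBasisIndex ℝ NR
  let v : (({I : Ideal A // I.IsMaximal} ⊕ {p : {I : Ideal A // I.IsMaximal} // finrank ℝ (A ⧸ p.1) = 2}) ⊕ KN) → A :=
    Sum.elim (Sum.elim (fun m => ε m) (fun p => w p.1)) (fun k => (nb k : A))
  have hnb_nil : ∀ k : KN, (nb k : A) ∈ nilradical A := fun k => (nb k).2
  have hTnil_l : ∀ (n x : A), n ∈ nilradical A → TF n x = 0 := fun n x hn => by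
    rw [TF_apply]; exact tr_nil (Ideal.mul_mem_right _ _ hn)
  have hTnil_r : ∀ (x n : A), n ∈ nilradical A → TF x n = 0 := fun x n hn => by
    rw [TF_apply]; exact tr_nil (Ideal.mul_mem_left _ _ hn)
  let π : ({I : Ideal A // I.IsMaximal} ⊕ {p : {I : Ideal A // I.IsMaximal} // finrank ℝ (A ⧸ p.1) = 2}) → {I : Ideal A // I.IsMaximal} :=
    Sum.elim (fun m => m) (fun p => p.1)
  have hvan : ∀ (p : {I : Ideal A // I.IsMaximal} ⊕ {p : {I : Ideal A // I.IsMaximal} // finrank ℝ (A ⧸ p.1) = 2}) (m' : {I : Ideal A // I.IsMaximal}),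
      m' ≠ π p → Ideal.Quotient.mk m'.1 (Sum.elim (fun m => ε m) (fun p => w p.1) p) = 0 := by
    rintro (mm | pp) m' hne
    · exact hε0 mm m' hne
    · exact hw0 pp.1 m' hne
  have hcross : ∀ p q, π p ≠ π q →
      TF (Sum.elim (fun m => ε m) (fun p => w p.1) p)
        (Sum.elim (fun m => ε m) (fun p => w p.1) q) = 0 := by
    intro p q hne
    rw [TF_apply]
    apply tr_nil
    rw [mem_nil_iff']
    intro m''
    rw [map_mul]
    rcases eq_or_ne m'' (π p) with h | h
    · rw [hvan q m'' (h ▸ hne), mul_zero]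
    · rw [hvan p m'' h, zero_mul]
  let Φ : A →ₗ[ℝ] (∀ m : {I : Ideal A // I.IsMaximal}, A ⧸ m.1) :=
    LinearMap.pi (fun m => (Ideal.Quotient.mkₐ ℝ m.1).toLinearMap)
  have hΦap : ∀ (x : A) (m : {I : Ideal A // I.IsMaximal}),
      Φ x m = Ideal.Quotient.mk m.1 x := fun x m => rfl
  have hcop : Pairwise (Function.onFun IsCoprime fun m : {I : Ideal A // I.IsMaximal} => m.1) := by
    intro i j hij
    exact Ideal.isCoprime_iff_sup_eq.mpr (i.2.coprime_of_ne j.2 fun h => hij (Subtype.ext h))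
  have hΦsurj : Function.Surjective Φ := by
    intro g
    obtain ⟨y, hy⟩ := Ideal.quotientInfToPiQuotient_surj hcop g
    obtain ⟨x, rfl⟩ := Ideal.Quotient.mk_surjective y
    refine ⟨x, funext fun m => ?_⟩
    have h := congrFun hy m
    rw [Ideal.quotientInfToPiQuotient_mk'] at h
    rw [hΦap]
    exact h
  have hΦker : LinearMap.ker Φ = NR := by
    ext x
    rw [LinearMap.mem_ker]
    constructor
    · intro h
      refine (Submodule.restrictScalars_mem ℝ _ _).mpr ((mem_nil_iff' x).mpr fun m => ?_)
      rw [← hΦap x m, h]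
      rfl
    · intro h
      refine funext fun m => ?_
      show Ideal.Quotient.mk m.1 x = 0
      exact (mem_nil_iff' x).mp ((Submodule.restrictScalars_mem ℝ _ _).mp h) m
  have hd12 : ∀ m : {I : Ideal A // I.IsMaximal},
      finrank ℝ (A ⧸ m.1) = 1 ∨ finrank ℝ (A ⧸ m.1) = 2 := fun m =>
    (hdim m).imp And.left And.left
  have hcard : Fintype.card (({I : Ideal A // I.IsMaximal} ⊕ {p : {I : Ideal A // I.IsMaximal} // finrank ℝ (A ⧸ p.1) = 2}) ⊕ KN) = finrank ℝ A := by
    have h1 := LinearMap.finrank_range_add_finrank_ker Φ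
    rw [LinearMap.range_eq_top.mpr hΦsurj, finrank_top, hΦker] at h1
    have hpi : finrank ℝ (∀ m : {I : Ideal A // I.IsMaximal}, A ⧸ m.1) =
        ∑ m : {I : Ideal A // I.IsMaximal}, finrank ℝ (A ⧸ m.1) :=
      Module.finrank_pi_fintype ℝ
    have hterm : ∀ m : {I : Ideal A // I.IsMaximal}, finrank ℝ (A ⧸ m.1) =
        1 + (if finrank ℝ (A ⧸ m.1) = 2 then 1 else 0) := by
      intro m
      rcases hd12 m with h | h <;> rw [h] <;> norm_num
    have hsum : ∑ m : {I : Ideal A // I.IsMaximal}, finrank ℝ (A ⧸ m.1) =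
        Fintype.card {I : Ideal A // I.IsMaximal} + Fintype.card {p : {I : Ideal A // I.IsMaximal} // finrank ℝ (A ⧸ p.1) = 2} := by
      rw [Finset.sum_congr rfl fun m _ => hterm m, Finset.sum_add_distrib,
        Finset.sum_const, smul_eq_mul, mul_one, ← Finset.card_filter,
        Finset.card_univ, Fintype.card_subtype (p := fun p : {I : Ideal A // I.IsMaximal} =>
          finrank ℝ (A ⧸ p.1) = 2)]
    have hKN : finrank ℝ NR = Fintype.card KN :=
      Module.finrank_eq_card_chooseBasisIndex ℝ NR
    rw [Fintype.card_sum, Fintype.card_sum]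
    omega
  have hspanv : ⊤ ≤ Submodule.span ℝ (Set.range v) := by
    intro x _
    choose αf βf hcoef using fun m => hspan m (Ideal.Quotient.mk m.1 x)
    set y := ∑ m : {I : Ideal A // I.IsMaximal}, (αf m • ε m + βf m • w m) with hy
    have hymem : y ∈ Submodule.span ℝ (Set.range v) := by
      refine Submodule.sum_mem _ fun m _ => Submodule.add_mem _ ?_ ?_
      · exact Submodule.smul_mem _ _ (Submodule.subset_span ⟨.inl (.inl m), rfl⟩)
      · rcases hdim m with ⟨_, hwz⟩ | ⟨h2, _⟩
        · rw [hwz, smul_zero]; exact Submodule.zero_mem _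
        · exact Submodule.smul_mem _ _ (Submodule.subset_span ⟨.inl (.inr ⟨m, h2⟩), rfl⟩)
    have hxy : x - y ∈ NR := by
      rw [← hΦker, LinearMap.mem_ker]
      refine funext fun m => ?_
      show Ideal.Quotient.mk m.1 (x - y) = 0
      have hym : Ideal.Quotient.mk m.1 y =
          αf m • Ideal.Quotient.mk m.1 (ε m) + βf m • Ideal.Quotient.mk m.1 (w m) := by
        rw [hy, map_sum, Finset.sum_eq_single m ?_ ?_]
        · rw [map_add, mk_smul, mk_smul]
        · intro m' _ hne
          rw [map_add, mk_smul, mk_smul, hε0 m' m (Ne.symm hne), hw0 m' m (Ne.symm hne),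
            smul_zero, smul_zero, add_zero]
        · intro habs
          exact absurd (Finset.mem_univ m) habs
      rw [map_sub, hym, ← hcoef m, sub_self]
    have hNRle : NR ≤ Submodule.span ℝ (Set.range v) := by
      intro n hn
      have h1 : (⟨n, hn⟩ : NR) ∈ (⊤ : Submodule ℝ NR) := Submodule.mem_top
      rw [← nb.span_eq] at h1
      have h2 : n ∈ Submodule.map NR.subtype (Submodule.span ℝ (Set.range nb)) :=
        ⟨⟨n, hn⟩, h1, rfl⟩
      rw [Submodule.map_span] at h2
      refine Submodule.span_mono ?_ h2
      rintro _ ⟨_, ⟨k, rfl⟩, rfl⟩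
      exact ⟨.inr k, rfl⟩
    have hdecomp : x = y + (x - y) := by ring
    exact hdecomp ▸ Submodule.add_mem _ hymem (hNRle hxy)
  let cb : Basis (({I : Ideal A // I.IsMaximal} ⊕ {p : {I : Ideal A // I.IsMaximal} // finrank ℝ (A ⧸ p.1) = 2}) ⊕ KN) ℝ A :=
    basisOfTopLeSpanOfCardEqFinrank v hspanv hcard
  have hcb : ⇑cb = v := coe_basisOfTopLeSpanOfCardEqFinrank v hspanv hcard
  have horth : ∀ x y, x ≠ y → TF (cb x) (cb y) = 0 := by
    intro x y hxy
    rw [congrFun hcb x, congrFun hcb y]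
    rcases x with p | k
    · rcases y with q | k'
      · rcases eq_or_ne (π p) (π q) with hpq | hpq
        · rcases p with mm | pp
          · rcases q with qq | qq2
            · exact (hxy (by rw [show mm = qq from hpq])).elim
            · show TF (ε mm) (w qq2.1) = 0
              rw [show mm = qq2.1 from hpq]
              exact hTεw qq2.1
          · rcases q with qq | qq2
            · show TF (w pp.1) (ε qq) = 0
              rw [show pp.1 = qq from hpq]
              exact hTwε qq
            · exact (hxy (by rw [show pp = qq2 from Subtype.ext hpq])).elim
        · exact hcross p q hpq
      · exact hTnil_r _ _ (hnb_nil k')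
    · exact hTnil_l _ _ (hnb_nil k)
  have hborth : ∀ i j, i ≠ j → TF (b i) (b j) = 0 := fun i j hij => by
    rw [TF_apply]; exact hdiag i j hij
  have hposc := pos_count_eq TF b cb hborth horth
  have hnegc := neg_count_eq TF b cb hborth horth
  simp only [hcb] at hposc hnegc
  have hposval : Nat.card {x // 0 < TF (v x) (v x)} =
      Fintype.card {I : Ideal A // I.IsMaximal} := by
    have h1 : ∀ k : KN, ¬ 0 < TF (v (.inr k)) (v (.inr k)) := fun k => by
      rw [show TF (v (.inr k)) (v (.inr k)) = 0 from hTnil_l _ _ (hnb_nil k)]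
      exact lt_irrefl 0
    have h2 : ∀ p : {p : {I : Ideal A // I.IsMaximal} // finrank ℝ (A ⧸ p.1) = 2}, ¬ 0 < TF (v (.inl (.inr p))) (v (.inl (.inr p))) := fun p => by
      rcases hdim p.1 with ⟨h1', _⟩ | ⟨_, hneg⟩
      · exact absurd (h1' ▸ p.2) (by norm_num)
      · show ¬ 0 < TF (w p.1) (w p.1)
        linarith
    have h3 : ∀ m : {I : Ideal A // I.IsMaximal},
        0 < TF (v (.inl (.inl m))) (v (.inl (.inl m))) := fun m => hTpos m
    rw [Nat.card_congr ((sumSubtypeLeft h1).trans ((sumSubtypeLeft h2).trans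
      (Equiv.subtypeUnivEquiv h3)))]
    exact Nat.card_eq_fintype_card
  have hnegval : Nat.card {x // TF (v x) (v x) < 0} = Fintype.card {p : {I : Ideal A // I.IsMaximal} // finrank ℝ (A ⧸ p.1) = 2} := by
    have h1 : ∀ k : KN, ¬ TF (v (.inr k)) (v (.inr k)) < 0 := fun k => by
      rw [show TF (v (.inr k)) (v (.inr k)) = 0 from hTnil_l _ _ (hnb_nil k)]
      exact lt_irrefl 0
    have h2 : ∀ m : {I : Ideal A // I.IsMaximal},
        ¬ TF (v (.inl (.inl m))) (v (.inl (.inl m))) < 0 := fun m => by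
      have := hTpos m
      show ¬ TF (ε m) (ε m) < 0
      linarith
    have h3 : ∀ p : {p : {I : Ideal A // I.IsMaximal} // finrank ℝ (A ⧸ p.1) = 2}, TF (v (.inl (.inr p))) (v (.inl (.inr p))) < 0 := fun p => by
      rcases hdim p.1 with ⟨h1', _⟩ | ⟨_, hneg⟩
      · exact absurd (h1' ▸ p.2) (by norm_num)
      · exact hneg
    rw [Nat.card_congr ((sumSubtypeLeft h1).trans ((sumSubtypeRight h2).trans
      (Equiv.subtypeUnivEquiv h3)))]
    exact Nat.card_eq_fintype_card
  have hhom : Nat.card (A →ₐ[ℝ] ℝ) =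
      Fintype.card {p : {I : Ideal A // I.IsMaximal} // finrank ℝ (A ⧸ p.1) = 1} := by
    rw [Nat.card_congr (homEquiv (A := A))]
    exact Nat.card_eq_fintype_card
  have hcompl : Fintype.card {p : {I : Ideal A // I.IsMaximal} // finrank ℝ (A ⧸ p.1) = 2} =
      Fintype.card {p : {I : Ideal A // I.IsMaximal} // ¬ finrank ℝ (A ⧸ p.1) = 1} := by
    refine Fintype.card_congr (Equiv.subtypeEquivRight fun m => ?_)
    rcases hd12 m with h | h <;> rw [h] <;> norm_num
  have hsplit : Fintype.card {p : {I : Ideal A // I.IsMaximal} // ¬ finrank ℝ (A ⧸ p.1) = 1} =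
      Fintype.card {I : Ideal A // I.IsMaximal} -
        Fintype.card {p : {I : Ideal A // I.IsMaximal} // finrank ℝ (A ⧸ p.1) = 1} :=
    Fintype.card_subtype_compl _
  have hle : Fintype.card {p : {I : Ideal A // I.IsMaximal} // finrank ℝ (A ⧸ p.1) = 1} ≤
      Fintype.card {I : Ideal A // I.IsMaximal} := Fintype.card_subtype_le _
  simp only [← TF_apply]
  rw [hposc, hnegc, hposval, hnegval, hhom]
  omega

end Main

section Solutions

private lemma aeval_eq_eval' {n : ℕ} (a : Fin n → ℝ) (p : MvPolynomial (Fin n) ℝ) :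
    MvPolynomial.aeval a p = MvPolynomial.eval a p := by
  rw [MvPolynomial.aeval_def, Algebra.algebraMap_self]
  rfl

private noncomputable def solEquiv {n s : ℕ} (f : Fin s → MvPolynomial (Fin n) ℝ)
    (I : Ideal (MvPolynomial (Fin n) ℝ)) (hI : I = Ideal.span (Set.range f))
    (S : Set (Fin n → ℝ)) (hS : S = {a | ∀ i, MvPolynomial.eval a (f i) = 0}) :
    S ≃ ((MvPolynomial (Fin n) ℝ ⧸ I) →ₐ[ℝ] ℝ) where
  toFun a := Ideal.Quotient.liftₐ I (MvPolynomial.aeval a.1) (by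
    subst hS
    intro p hp
    have hle : I ≤ RingHom.ker (MvPolynomial.aeval a.1 :
        MvPolynomial (Fin n) ℝ →ₐ[ℝ] ℝ) := by
      rw [hI, Ideal.span_le]
      rintro _ ⟨i, rfl⟩
      simp only [SetLike.mem_coe, RingHom.mem_ker, aeval_eq_eval']
      exact a.2 i
    exact RingHom.mem_ker.mp (hle hp))
  invFun φ := ⟨fun i => φ (Ideal.Quotient.mk I (MvPolynomial.X i)), by
    have hkey : ∀ p : MvPolynomial (Fin n) ℝ, φ (Ideal.Quotient.mk I p) =
        MvPolynomial.eval (fun i => φ (Ideal.Quotient.mk I (MvPolynomial.X i))) p := by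
      intro p
      have h1 : φ.comp (Ideal.Quotient.mkₐ ℝ I) =
          MvPolynomial.aeval (fun i => (φ.comp (Ideal.Quotient.mkₐ ℝ I)) (MvPolynomial.X i)) :=
        MvPolynomial.aeval_unique _
      have h2 := DFunLike.congr_fun h1 p
      simp only [AlgHom.comp_apply, Ideal.Quotient.mkₐ_eq_mk] at h2
      rw [h2, aeval_eq_eval']
    subst hS
    intro i
    rw [← hkey (f i)]
    have hfi : Ideal.Quotient.mk I (f i) = 0 :=
      Ideal.Quotient.eq_zero_iff_mem.mpr (hI ▸ Ideal.subset_span ⟨i, rfl⟩)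
    rw [hfi, map_zero]⟩
  left_inv a := by
    refine Subtype.ext (funext fun i => ?_)
    show Ideal.Quotient.liftₐ I (MvPolynomial.aeval a.1) _ (Ideal.Quotient.mk I
      (MvPolynomial.X i)) = a.1 i
    simp only [Ideal.Quotient.liftₐ_apply, Ideal.Quotient.lift_mk]
    simp
  right_inv φ := by
    refine Ideal.Quotient.algHom_ext ℝ (MvPolynomial.algHom_ext fun i => ?_)
    simp only [AlgHom.comp_apply, Ideal.Quotient.mkₐ_eq_mk]
    simp only [Ideal.Quotient.liftₐ_apply, Ideal.Quotient.lift_mk]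
    simp

end Solutions

/-- **Counting real solutions.** Let `f₁,…,f_s ∈ ℝ[x₁,…,x_n]` generate a zero-dimensional
ideal, so that `A = ℝ[x₁,…,x_n]/⟨f₁,…,f_s⟩` is finite-dimensional over `ℝ`, and let
`S = {a ∈ ℝⁿ : f₁(a) = ⋯ = f_s(a) = 0}` be the set of real solutions.  Then the quadratic
form `Q_A(α) = Tr(m_{α²})` has signature `σ(Q_A) = #S`: in any diagonalization of `Q_A`
(i.e. for any basis `b` of `A` orthogonal for the associated bilinear form
`T_A(α,β) = Tr(m_{αβ})`), the number of positive diagonal entries minus the number of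
negative diagonal entries equals the number of real solutions. -/
theorem signature_eq_card_real_solutions {n s : ℕ} (f : Fin s → MvPolynomial (Fin n) ℝ)
    (I : Ideal (MvPolynomial (Fin n) ℝ)) (hI : I = Ideal.span (Set.range f))
    (hA : FiniteDimensional ℝ (MvPolynomial (Fin n) ℝ ⧸ I))
    (S : Set (Fin n → ℝ)) (hS : S = {a | ∀ i, MvPolynomial.eval a (f i) = 0})
    (ι : Type) [Fintype ι] (b : Basis ι ℝ (MvPolynomial (Fin n) ℝ ⧸ I))
    (hdiag : ∀ i j, i ≠ j →
      LinearMap.trace ℝ (MvPolynomial (Fin n) ℝ ⧸ I)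
        (LinearMap.mulLeft ℝ (b i * b j)) = 0) :
    (Nat.card {i : ι // 0 < LinearMap.trace ℝ (MvPolynomial (Fin n) ℝ ⧸ I)
          (LinearMap.mulLeft ℝ (b i * b i))} : ℤ) -
        (Nat.card {i : ι // LinearMap.trace ℝ (MvPolynomial (Fin n) ℝ ⧸ I)
          (LinearMap.mulLeft ℝ (b i * b i)) < 0} : ℤ) =
      Nat.card S := by
  
  have hmain := sig_eq_card_algHom (MvPolynomial (Fin n) ℝ ⧸ I) b hdiag
  rw [hmain, Nat.card_congr (solEquiv f I hI S hS)]
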